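/- (Factorization for the symmetric A₂ quiver.) Let C = [[0,1],[1,0]] ∈ Mat_{2×2}(ℤ). Then in K[[x₁,x₂]]: P_C · Poch((1,0),0) · Poch((0,1),0) = Poch((1,1),0), i.e. P_C = (x₁;q²)_∞^{−1} (x₂;q²)_∞^{−1} (x₁x₂;q²)_∞. Consequently, the function Ω with Ω((1,0),0) = −1, Ω((0,1),0) = −1, Ω((1,1),0) = +1, and Ω(d,s) = 0 otherwise, is a DT-exponent function for C: the symmetric A₂ quiver has exactly three nonzero motivic DT invariants. -/

import Mathlib

/-!
Comparing coefficients of `x₁^a x₂^b`, the factorization becomes a double sum. Rothe's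
`q`-binomial theorem, in the homogeneous form
`∑ᵢ (-1)^i q^{i(i-1)} [a choose i]_{q²} s^{a-i} = ∏_{k<a} (s - q^{2k})`,
evaluates the inner sum at `s = q^{2m}`: it vanishes for `m < a` (the factor `k = m`) and is a
single ratio of `q`-Pochhammer symbols otherwise. The outer sum is then the same identity at
`s = 1`, which is `δ_{a,b}`.

For the DT statement, the product truncated at total degree `n ≥ 2` is the whole factorization;
for `n = 1` it lacks only `(x₁x₂;q²)_∞`, which is `1` up to terms of degree `≥ 2`.
-/

noncomputable section

/-- The base field `K = ℚ(q)`. -/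
abbrev K : Type := RatFunc ℚ

/-- The variable `q` of `K = ℚ(q)`. -/
def qq : K := RatFunc.X

/-- The finite q-Pochhammer symbol `(α; q²)_n = ∏_{k=0}^{n-1} (1 - α q^{2k})`. -/
def qPoch (α : K) (n : ℕ) : K := ∏ k ∈ Finset.range n, (1 - α * qq ^ (2 * k))

/-- The quadratic form `dᵀ C d` of an integer matrix on a dimension vector. -/
def quadForm {N : ℕ} (C : Matrix (Fin N) (Fin N) ℤ) (d : Fin N → ℕ) : ℤ :=
  ∑ i, ∑ j, C i j * (d i : ℤ) * (d j : ℤ)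

/-- The coefficient of `x^d` in the motivic generating series of the extended
symmetric quiver with adjacency matrix `C`: `(-q)^{dᵀCd} / ∏ᵢ (q²;q²)_{dᵢ}`. -/
def Pcoeff {N : ℕ} (C : Matrix (Fin N) (Fin N) ℤ) (d : Fin N → ℕ) : K :=
  (-qq) ^ quadForm C d / ∏ i, qPoch (qq ^ 2) (d i)

/-- The motivic generating series `P_C ∈ K[[x_1,…,x_N]]`. -/
def Pser {N : ℕ} (C : Matrix (Fin N) (Fin N) ℤ) : MvPowerSeries (Fin N) K :=
  fun d => Pcoeff C (fun i => d i)

open Classical in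
/-- Formal expansion of the infinite q-Pochhammer `(q^s x^d ; q²)_∞`:
its coefficient at `j • d` is `(-1)^j q^{j(j-1)+js} / (q²;q²)_j`, and all other
coefficients vanish. -/
def Poch {N : ℕ} (d : Fin N →₀ ℕ) (s : ℤ) : MvPowerSeries (Fin N) K :=
  fun e =>
    if h : ∃ j : ℕ, e = j • d then
      (-1 : K) ^ h.choose *
        qq ^ ((h.choose : ℤ) * ((h.choose : ℤ) - 1) + (h.choose : ℤ) * s) /
        qPoch (qq ^ 2) h.choose
    else 0

lemma qPoch_zero (α : K) : qPoch α 0 = 1 := by simp [qPoch]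

lemma constantCoeff_Poch {N : ℕ} {d : Fin N →₀ ℕ} (hd : d ≠ 0) (s : ℤ) :
    MvPowerSeries.constantCoeff (Poch d s) = 1 := by
  have h : ∃ j : ℕ, (0 : Fin N →₀ ℕ) = j • d := ⟨0, by simp⟩
  have hc : h.choose = 0 := by
    by_contra hc
    obtain ⟨x, hx⟩ := Finsupp.ne_iff.mp hd
    have hs := h.choose_spec
    have hx0 : (0 : Fin N →₀ ℕ) x = (h.choose • d) x := by rw [← hs]
    simp only [Finsupp.coe_zero, Pi.zero_apply, Finsupp.smul_apply, smul_eq_mul] at hx0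
    rcases Nat.mul_eq_zero.mp hx0.symm with h1 | h2
    · exact hc h1
    · simp at hx; exact hx h2
  have h0 : MvPowerSeries.constantCoeff (Poch d s) = Poch d s 0 := rfl
  rw [h0]
  unfold Poch
  rw [dif_pos h, hc]
  simp [qPoch_zero]

lemma isUnit_Poch {N : ℕ} {d : Fin N →₀ ℕ} (hd : d ≠ 0) (s : ℤ) :
    IsUnit (Poch d s) := by
  rw [MvPowerSeries.isUnit_iff_constantCoeff, constantCoeff_Poch hd s]
  exact isUnit_one

/-- `Poch d s` as an element of the unit group of `K[[x_1,…,x_N]]` (for `d ≠ 0`). -/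
def PochUnit {N : ℕ} (d : Fin N →₀ ℕ) (hd : d ≠ 0) (s : ℤ) : (MvPowerSeries (Fin N) K)ˣ :=
  (isUnit_Poch hd s).unit

open Classical in
/-- The product `∏_{0 < |d| ≤ n} ∏_s Poch(d,s)^{Ω(d,s)}`, taken in the unit group of
`K[[x_1,…,x_N]]` (integer powers allowed). -/
def DTProd {N : ℕ} (Ω : (Fin N →₀ ℕ) → ℤ → ℤ) (n : ℕ) : (MvPowerSeries (Fin N) K)ˣ :=
  ∏ᶠ (d : Fin N →₀ ℕ) (s : ℤ),
    if h : d ≠ 0 ∧ (d.sum fun _ c => c) ≤ n then PochUnit d h.1 s ^ Ω d s else 1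

/-- `Ω` is a DT-exponent function for `C`: for every `d ≠ 0` only finitely many `Ω d s`
are nonzero, and for every `n` the coefficients of `P_C` and of the finite product
`∏_{0<|d|≤n} ∏_{s} Poch(d,s)^{Ω(d,s)}` agree on all monomials of total degree `≤ n`.
The values `Ω d s` are the motivic Donaldson–Thomas invariants of `C`. -/
def IsDTExponent {N : ℕ} (C : Matrix (Fin N) (Fin N) ℤ) (Ω : (Fin N →₀ ℕ) → ℤ → ℤ) : Prop :=
  (∀ d : Fin N →₀ ℕ, d ≠ 0 → (Function.support (Ω d)).Finite) ∧
  ∀ n : ℕ, ∀ d : Fin N →₀ ℕ, (d.sum fun _ c => c) ≤ n →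
    MvPowerSeries.coeff d (Pser C) = MvPowerSeries.coeff d ↑(DTProd Ω n)

lemma Nat.add_one_mul_self_eq (a : ℕ) : (a + 1) * a = a * (a - 1) + 2 * a := by
  cases a <;> simp; ring

lemma qq_pow_ne_one {m : ℕ} (hm : m ≠ 0) : qq ^ m ≠ 1 := by
  intro h
  have hX : (Polynomial.X ^ m : Polynomial ℚ) = 1 := RatFunc.algebraMap_injective ℚ <| by
    rwa [map_pow, map_one, RatFunc.algebraMap_X]
  simpa [hm] using congrArg Polynomial.natDegree hX

lemma qPoch_succ (α : K) (n : ℕ) :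
    qPoch α (n + 1) = qPoch α n * (1 - α * qq ^ (2 * n)) :=
  Finset.prod_range_succ _ n

lemma qPoch_succ' (α : K) (n : ℕ) :
    qPoch α (n + 1) = (1 - α) * qPoch (α * qq ^ 2) n := by
  simp only [qPoch, Finset.prod_range_succ', mul_zero, pow_zero, mul_one, mul_comm _ (1 - α)]
  congr 1
  refine Finset.prod_congr rfl fun k _ => ?_
  ring

lemma qPoch_qq_sq_succ (n : ℕ) :
    qPoch (qq ^ 2) (n + 1) = qPoch (qq ^ 2) n * (1 - qq ^ (2 * n + 2)) := by
  rw [qPoch_succ]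
  ring

lemma qPoch_qq_sq_ne_zero (n : ℕ) : qPoch (qq ^ 2) n ≠ 0 :=
  Finset.prod_ne_zero_iff.mpr fun k _ => by
    rw [← pow_add]
    exact sub_ne_zero.mpr (qq_pow_ne_one (by omega)).symm

/-- Gaussian binomial coefficients in base `q²`, defined by the `q`-Pascal rule. -/
def qBinom : ℕ → ℕ → K
  | _, 0 => 1
  | 0, _ + 1 => 0
  | n + 1, k + 1 => qBinom n k + qq ^ (2 * (k + 1)) * qBinom n (k + 1)

lemma qBinom_zero_right (n : ℕ) : qBinom n 0 = 1 := by cases n <;> rfl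

lemma qBinom_succ_succ (n k : ℕ) :
    qBinom (n + 1) (k + 1) = qBinom n k + qq ^ (2 * (k + 1)) * qBinom n (k + 1) := rfl

lemma qBinom_eq_zero_of_lt : ∀ {n k : ℕ}, n < k → qBinom n k = 0
  | 0, _ + 1, _ => rfl
  | n + 1, k + 1, h => by
    rw [qBinom_succ_succ, qBinom_eq_zero_of_lt (by omega), qBinom_eq_zero_of_lt (by omega)]
    ring

lemma qBinom_add_mul_qPoch (k m : ℕ) :
    qBinom (k + m) k * (qPoch (qq ^ 2) k * qPoch (qq ^ 2) m) = qPoch (qq ^ 2) (k + m) := by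
  obtain ⟨n, hn⟩ : ∃ n, k + m = n := ⟨_, rfl⟩
  induction n generalizing k m with
  | zero =>
    obtain ⟨rfl, rfl⟩ : k = 0 ∧ m = 0 := by omega
    simp [qBinom_zero_right, qPoch]
  | succ n ih =>
    rcases k with _ | k
    · simp [qBinom_zero_right, qPoch]
    rcases m with _ | m
    · have h := ih k 0 (by omega)
      simp only [add_zero, qPoch_zero, mul_one] at h ⊢
      rw [qBinom_succ_succ, qBinom_eq_zero_of_lt (Nat.lt_succ_self k), qPoch_qq_sq_succ]
      linear_combination (1 - qq ^ (2 * k + 2)) * h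
    · have h₁ := ih k (m + 1) (by omega)
      have h₂ := ih (k + 1) m (by omega)
      rw [show k + (m + 1) = k + 1 + m by ring, qPoch_qq_sq_succ m] at h₁
      rw [qPoch_qq_sq_succ k] at h₂
      rw [show k + 1 + (m + 1) = k + 1 + m + 1 by ring, qBinom_succ_succ, qPoch_qq_sq_succ k,
        qPoch_qq_sq_succ m, qPoch_qq_sq_succ (k + 1 + m)]
      linear_combination (1 - qq ^ (2 * k + 2)) * h₁ +
        qq ^ (2 * (k + 1)) * (1 - qq ^ (2 * m + 2)) * h₂

lemma qBinom_mul_qPoch {n i : ℕ} (h : i ≤ n) :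
    qBinom n i * (qPoch (qq ^ 2) i * qPoch (qq ^ 2) (n - i)) = qPoch (qq ^ 2) n := by
  obtain ⟨m, rfl⟩ := Nat.exists_eq_add_of_le h
  rw [Nat.add_sub_cancel_left]
  exact qBinom_add_mul_qPoch i m

theorem sum_qBinom_mul_pow (n : ℕ) (t : K) :
    ∑ i ∈ Finset.range (n + 1), (-1) ^ i * qq ^ (i * (i - 1)) * qBinom n i * t ^ i =
      qPoch t n := by
  induction n generalizing t with
  | zero => simp [qBinom_zero_right, qPoch]
  | succ n ih =>
    set f : ℕ → K := fun i => (-1) ^ i * qq ^ (i * (i - 1)) * qBinom n i * (t * qq ^ 2) ^ i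
      with hf
    have hpascal (i : ℕ) : (-1) ^ (i + 1) * qq ^ ((i + 1) * (i + 1 - 1)) *
        qBinom (n + 1) (i + 1) * t ^ (i + 1) = -t * f i + f (i + 1) := by
      simp only [hf, qBinom_succ_succ, Nat.add_sub_cancel, Nat.add_one_mul_self_eq, pow_add,
        mul_pow, ← pow_mul]
      ring
    have hshift :
        ∑ i ∈ Finset.range (n + 1), f (i + 1) = ∑ i ∈ Finset.range (n + 1), f i - 1 := by
      have hf0 : f 0 = 1 := by simp [hf, qBinom_zero_right]
      have hfn : f (n + 1) = 0 := by simp [hf, qBinom_eq_zero_of_lt (Nat.lt_succ_self n)]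
      rw [eq_sub_iff_add_eq, ← hf0, ← Finset.sum_range_succ', Finset.sum_range_succ, hfn,
        add_zero]
    rw [Finset.sum_range_succ', Finset.sum_congr rfl fun i _ => hpascal i,
      Finset.sum_add_distrib, ← Finset.mul_sum, hshift, ih, qPoch_succ']
    simp only [neg_mul, pow_zero, zero_tsub, mul_zero, mul_one, qBinom_zero_right]
    ring

theorem sum_qBinom_mul_pow_sub (n : ℕ) {s : K} (hs : s ≠ 0) :
    ∑ i ∈ Finset.range (n + 1), (-1) ^ i * qq ^ (i * (i - 1)) * qBinom n i * s ^ (n - i) =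
      ∏ k ∈ Finset.range n, (s - qq ^ (2 * k)) := by
  calc _ = s ^ n * ∑ i ∈ Finset.range (n + 1),
        (-1) ^ i * qq ^ (i * (i - 1)) * qBinom n i * s⁻¹ ^ i := by
        rw [Finset.mul_sum]
        refine Finset.sum_congr rfl fun i hi => ?_
        rw [pow_sub₀ s hs (Nat.lt_succ_iff.mp (Finset.mem_range.mp hi)), inv_pow]
        ring
    _ = ∏ k ∈ Finset.range n, (s - qq ^ (2 * k)) := by
        rw [sum_qBinom_mul_pow, qPoch, ← Finset.card_range n, ← Finset.prod_const,
          Finset.card_range, ← Finset.prod_mul_distrib]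
        refine Finset.prod_congr rfl fun k _ => ?_
        field_simp

lemma sum_pow_div_qPoch_mul (a : ℕ) {s : K} (hs : s ≠ 0) :
    ∑ i ∈ Finset.range (a + 1), s ^ (a - i) / qPoch (qq ^ 2) (a - i) *
        ((-1) ^ i * qq ^ (i * (i - 1)) / qPoch (qq ^ 2) i) =
      (∏ k ∈ Finset.range a, (s - qq ^ (2 * k))) / qPoch (qq ^ 2) a := by
  rw [← sum_qBinom_mul_pow_sub a hs, Finset.sum_div]
  refine Finset.sum_congr rfl fun i hi => ?_
  have h := qBinom_mul_qPoch (Nat.lt_succ_iff.mp (Finset.mem_range.mp hi))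
  have := qPoch_qq_sq_ne_zero i
  have := qPoch_qq_sq_ne_zero (a - i)
  have := qPoch_qq_sq_ne_zero a
  field_simp
  linear_combination -qq ^ (i * (i - 1)) * h

lemma prod_qq_pow_sub_eq_zero {a m : ℕ} (h : m < a) :
    ∏ k ∈ Finset.range a, (qq ^ (2 * m) - qq ^ (2 * k)) = 0 :=
  Finset.prod_eq_zero (Finset.mem_range.mpr h) (sub_self _)

lemma prod_qq_pow_sub_mul_qPoch (a c : ℕ) :
    (∏ k ∈ Finset.range a, (qq ^ (2 * (a + c)) - qq ^ (2 * k))) * qPoch (qq ^ 2) c =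
      (-1) ^ a * qq ^ (a * (a - 1)) * qPoch (qq ^ 2) (a + c) := by
  induction a with
  | zero => simp
  | succ a ih =>
    have hshift : ∏ k ∈ Finset.range a, (qq ^ (2 * (a + 1 + c)) - qq ^ (2 * (k + 1))) =
        (qq ^ 2) ^ a * ∏ k ∈ Finset.range a, (qq ^ (2 * (a + c)) - qq ^ (2 * k)) := by
      rw [← Finset.card_range a, ← Finset.prod_const, Finset.card_range,
        ← Finset.prod_mul_distrib]
      refine Finset.prod_congr rfl fun k _ => ?_
      ring
    rw [Finset.prod_range_succ', hshift, show a + 1 + c = a + c + 1 by ring, qPoch_qq_sq_succ,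
      Nat.add_sub_cancel, Nat.add_one_mul_self_eq]
    linear_combination (qq ^ (2 * (a + c) + 2) - 1) * (qq ^ 2) ^ a * ih

lemma sum_qq_pow_div_qPoch_mul (a m : ℕ) :
    ∑ i ∈ Finset.range (a + 1),
        qq ^ (2 * ((a - i) * m)) / (qPoch (qq ^ 2) (a - i) * qPoch (qq ^ 2) m) *
          ((-1) ^ i * qq ^ (i * (i - 1)) / qPoch (qq ^ 2) i) =
      if a ≤ m then (-1) ^ a * qq ^ (a * (a - 1)) / (qPoch (qq ^ 2) a * qPoch (qq ^ 2) (m - a))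
      else 0 := by
  have hconv :=
    sum_pow_div_qPoch_mul a (pow_ne_zero (2 * m) RatFunc.X_ne_zero : qq ^ (2 * m) ≠ 0)
  calc _ = (∑ i ∈ Finset.range (a + 1), (qq ^ (2 * m)) ^ (a - i) / qPoch (qq ^ 2) (a - i) *
        ((-1) ^ i * qq ^ (i * (i - 1)) / qPoch (qq ^ 2) i)) / qPoch (qq ^ 2) m := by
        rw [Finset.sum_div]
        refine Finset.sum_congr rfl fun i _ => ?_
        rw [← pow_mul, div_mul_eq_div_div_swap]
        ring
    _ = _ := by
        rw [hconv, div_div]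
        split_ifs with h
        · obtain ⟨c, rfl⟩ := Nat.exists_eq_add_of_le h
          have hprod := prod_qq_pow_sub_mul_qPoch a c
          have := qPoch_qq_sq_ne_zero a
          have := qPoch_qq_sq_ne_zero c
          have := qPoch_qq_sq_ne_zero (a + c)
          rw [Nat.add_sub_cancel_left, div_eq_div_iff (by positivity) (by positivity)]
          linear_combination qPoch (qq ^ 2) a * hprod
        · rw [prod_qq_pow_sub_eq_zero (not_le.mp h), zero_div]

lemma sum_div_qPoch_mul (n : ℕ) :
    ∑ j ∈ Finset.range (n + 1), 1 / qPoch (qq ^ 2) (n - j) *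
        ((-1) ^ j * qq ^ (j * (j - 1)) / qPoch (qq ^ 2) j) =
      if n = 0 then 1 else 0 := by
  convert sum_qq_pow_div_qPoch_mul n 0 using 1
  · simp [qPoch_zero]
  · rcases n with _ | n <;> simp [qPoch_zero]

/-- The coefficient of `x^{j d}` in `Poch d s`. -/
def pochCoeff (s : ℤ) (j : ℕ) : K :=
  (-1) ^ j * qq ^ ((j : ℤ) * ((j : ℤ) - 1) + (j : ℤ) * s) / qPoch (qq ^ 2) j

lemma pochCoeff_zero (j : ℕ) :
    pochCoeff 0 j = (-1) ^ j * qq ^ (j * (j - 1)) / qPoch (qq ^ 2) j := by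
  have hexp : (j : ℤ) * ((j : ℤ) - 1) + (j : ℤ) * 0 = ((j * (j - 1) : ℕ) : ℤ) := by
    rcases j with _ | j
    · simp
    · push_cast [Nat.add_sub_cancel]
      ring
  rw [pochCoeff, hexp, zpow_natCast]

lemma Finsupp.nsmul_left_injective {σ : Type*} {d : σ →₀ ℕ} (hd : d ≠ 0) :
    Function.Injective (· • d : ℕ → σ →₀ ℕ) := by
  intro j j' h
  obtain ⟨x, hx⟩ := Finsupp.ne_iff.mp hd
  have hjx := DFunLike.congr_fun h x
  simp only [Finsupp.smul_apply, smul_eq_mul] at hjx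
  exact Nat.eq_of_mul_eq_mul_right (Nat.pos_of_ne_zero hx) hjx

section Poch

variable {N : ℕ} {d : Fin N →₀ ℕ} (s : ℤ)

lemma Poch_apply_nsmul (hd : d ≠ 0) (j : ℕ) : Poch d s (j • d) = pochCoeff s j := by
  have h : ∃ j' : ℕ, j • d = j' • d := ⟨j, rfl⟩
  rw [Poch, dif_pos h, ← Finsupp.nsmul_left_injective hd h.choose_spec, pochCoeff]

lemma Poch_apply_of_forall_ne {e : Fin N →₀ ℕ} (h : ∀ j : ℕ, e ≠ j • d) : Poch d s e = 0 := by
  rw [Poch, dif_neg (not_exists.mpr h)]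

lemma coeff_mul_Poch_single (f : MvPowerSeries (Fin N) K) (i : Fin N) (e : Fin N →₀ ℕ) :
    MvPowerSeries.coeff e (f * Poch (Finsupp.single i 1) s) =
      ∑ j ∈ Finset.range (e i + 1),
        MvPowerSeries.coeff (e - Finsupp.single i j) f * pochCoeff s j := by
  have hsingle (j : ℕ) : Finsupp.single i j = j • Finsupp.single i 1 := by simp
  rw [MvPowerSeries.coeff_mul]
  symm
  refine Finset.sum_of_injOn (fun j => (e - Finsupp.single i j, Finsupp.single i j))
    (fun j _ j' _ h => Finsupp.single_injective i (congrArg Prod.snd h)) ?_ ?_ ?_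
  · intro j hj
    simp only [Finset.coe_range, Set.mem_Iio] at hj
    simp only [Finset.mem_coe, Finset.HasAntidiagonal.mem_antidiagonal]
    exact tsub_add_cancel_of_le (Finsupp.single_le_iff.mpr (by omega))
  · rintro ⟨p₁, p₂⟩ hp hnot
    rw [Finset.HasAntidiagonal.mem_antidiagonal] at hp
    rw [MvPowerSeries.coeff_apply _ p₂, Poch_apply_of_forall_ne, mul_zero]
    rintro j rfl
    refine hnot ⟨j, ?_, ?_⟩
    · have := DFunLike.congr_fun hp i
      simp only [Finsupp.add_apply, Finsupp.smul_apply, Finsupp.single_eq_same, smul_eq_mul,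
        mul_one] at this
      simp only [Finset.coe_range, Set.mem_Iio]
      omega
    · simp only [← hsingle, ← hp, add_tsub_cancel_right]
  · intro j _
    rw [MvPowerSeries.coeff_apply (Poch _ s), hsingle, Poch_apply_nsmul s (by simp)]

end Poch

lemma coeff_Poch_mul_of_degree_lt {N : ℕ} {D : Fin N →₀ ℕ} (hD : D ≠ 0) (s : ℤ)
    (w : MvPowerSeries (Fin N) K) {e : Fin N →₀ ℕ} (he : e.degree < D.degree) :
    MvPowerSeries.coeff e (Poch D s * w) = MvPowerSeries.coeff e w := by
  rw [MvPowerSeries.coeff_mul, Finset.sum_eq_single (0, e)]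
  · rw [MvPowerSeries.coeff_apply _ 0, ← zero_smul ℕ D, Poch_apply_nsmul s hD, zero_smul]
    simp [pochCoeff, qPoch_zero]
  · rintro ⟨p₁, p₂⟩ hp hne
    rw [Finset.HasAntidiagonal.mem_antidiagonal] at hp
    rw [MvPowerSeries.coeff_apply _ p₁, Poch_apply_of_forall_ne, zero_mul]
    rintro (_ | j) rfl
    · exact hne (by simpa using hp)
    · have : (j + 1) * D.degree ≤ e.degree := by
        rw [← hp, map_add, ← smul_eq_mul, ← map_nsmul]
        exact Nat.le_add_right _ _
      nlinarith
  · simp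

lemma coe_PochUnit {N : ℕ} {d : Fin N →₀ ℕ} (hd : d ≠ 0) (s : ℤ) :
    (PochUnit d hd s : MvPowerSeries (Fin N) K) = Poch d s :=
  IsUnit.unit_spec _

open Classical in
lemma DTProd_eq_prod {N : ℕ} {Ω : (Fin N →₀ ℕ) → ℤ → ℤ} (S : Finset (Fin N →₀ ℕ))
    (hΩ : ∀ d s, Ω d s ≠ 0 → d ∈ S ∧ s = 0) (n : ℕ) :
    DTProd Ω n =
      ∏ d ∈ S, if h : d ≠ 0 ∧ d.degree ≤ n then PochUnit d h.1 0 ^ Ω d 0 else 1 := by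
  have hinner (d : Fin N →₀ ℕ) : (∏ᶠ s : ℤ, if h : d ≠ 0 ∧ (d.sum fun _ c => c) ≤ n then
      PochUnit d h.1 s ^ Ω d s else 1) =
      if h : d ≠ 0 ∧ d.degree ≤ n then PochUnit d h.1 0 ^ Ω d 0 else 1 := by
    refine finprod_eq_single _ 0 fun s hs => ?_
    split_ifs
    · rw [not_not.mp fun h => hs (hΩ d s h).2, zpow_zero]
    · rfl
  rw [DTProd, finprod_congr hinner]
  refine finprod_eq_prod_of_mulSupport_subset _ fun d hd => ?_
  by_contra hdS
  refine hd ?_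
  dsimp only
  split_ifs
  · rw [not_not.mp fun h => hdS (hΩ d 0 h).1, zpow_zero]
  · rfl

section A2

local notation "A₂" => !![(0 : ℤ), 1; 1, 0]

lemma coeff_Pser_A2 (u : Fin 2 →₀ ℕ) :
    MvPowerSeries.coeff u (Pser A₂) =
      qq ^ (2 * (u 0 * u 1)) / (qPoch (qq ^ 2) (u 0) * qPoch (qq ^ 2) (u 1)) := by
  have hquad : quadForm A₂ (fun k => u k) = ((2 * (u 0 * u 1) : ℕ) : ℤ) := by
    simp only [quadForm, Matrix.of_apply, Matrix.cons_val', Matrix.cons_val_fin_one,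
      Fin.sum_univ_two, Matrix.cons_val_zero, Matrix.cons_val_one, zero_mul, one_mul, zero_add,
      add_zero, Nat.cast_mul, Nat.cast_ofNat]
    ring
  rw [MvPowerSeries.coeff_apply, Pser, Pcoeff, hquad, zpow_natCast, Even.neg_pow ⟨_, two_mul _⟩,
    Fin.prod_univ_two]

lemma coeff_Pser_A2_mul_Poch (u : Fin 2 →₀ ℕ) :
    MvPowerSeries.coeff u (Pser A₂ * Poch (Finsupp.single 0 1) 0) =
      if u 0 ≤ u 1 then
        (-1) ^ u 0 * qq ^ (u 0 * (u 0 - 1)) /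
          (qPoch (qq ^ 2) (u 0) * qPoch (qq ^ 2) (u 1 - u 0))
      else 0 := by
  rw [coeff_mul_Poch_single, ← sum_qq_pow_div_qPoch_mul]
  refine Finset.sum_congr rfl fun i _ => ?_
  simp [coeff_Pser_A2, pochCoeff_zero]

lemma coeff_Pser_A2_mul_Poch_mul_Poch (u : Fin 2 →₀ ℕ) :
    MvPowerSeries.coeff u
        (Pser A₂ * Poch (Finsupp.single 0 1) 0 * Poch (Finsupp.single 1 1) 0) =
      if u 0 = u 1 then pochCoeff 0 (u 0) else 0 := by
  have hsub (j : ℕ) : (u - Finsupp.single 1 j : Fin 2 →₀ ℕ) 0 = u 0 ∧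
      (u - Finsupp.single 1 j : Fin 2 →₀ ℕ) 1 = u 1 - j := by
    simp
  rw [coeff_mul_Poch_single]
  simp_rw [coeff_Pser_A2_mul_Poch, hsub, ite_mul, zero_mul]
  rw [← Finset.sum_filter]
  by_cases hle : u 0 ≤ u 1
  · obtain ⟨n, hn⟩ := Nat.exists_eq_add_of_le hle
    have hfilter : (Finset.range (u 1 + 1)).filter (fun j => u 0 ≤ u 1 - j) =
        Finset.range (n + 1) := by
      ext j
      simp only [Finset.mem_filter, Finset.mem_range]
      omega
    calc _ = (-1) ^ u 0 * qq ^ (u 0 * (u 0 - 1)) / qPoch (qq ^ 2) (u 0) *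
          ∑ j ∈ Finset.range (n + 1), 1 / qPoch (qq ^ 2) (n - j) *
            ((-1) ^ j * qq ^ (j * (j - 1)) / qPoch (qq ^ 2) j) := by
          rw [hfilter, Finset.mul_sum]
          refine Finset.sum_congr rfl fun j _ => ?_
          rw [pochCoeff_zero, show u 1 - j - u 0 = n - j by omega]
          ring
      _ = _ := by
          rw [sum_div_qPoch_mul, pochCoeff_zero]
          by_cases hn0 : n = 0 <;> simp [hn0, hn]
  · rw [Finset.filter_false_of_mem fun j _ => by omega, Finset.sum_empty, if_neg (by omega)]

theorem Pser_A2_mul_Poch_mul_Poch :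
    Pser A₂ * Poch (Finsupp.single 0 1) 0 * Poch (Finsupp.single 1 1) 0 =
      Poch (Finsupp.single 0 1 + Finsupp.single 1 1) 0 := by
  ext u
  rw [coeff_Pser_A2_mul_Poch_mul_Poch, MvPowerSeries.coeff_apply]
  split_ifs with h
  · have hu : u = u 0 • (Finsupp.single 0 1 + Finsupp.single 1 1) := by
      ext x
      fin_cases x <;> simp [h]
    rw [hu, Poch_apply_nsmul _ (by simp)]
    simp
  · refine (Poch_apply_of_forall_ne _ fun j hj => h ?_).symm
    simp [hj]

open Classical in
def omegaA2 : (Fin 2 →₀ ℕ) → ℤ → ℤ := fun d s =>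
  if d = Finsupp.single (0 : Fin 2) 1 ∧ s = 0 then -1
  else if d = Finsupp.single (1 : Fin 2) 1 ∧ s = 0 then -1
  else if d = Finsupp.single (0 : Fin 2) 1 + Finsupp.single (1 : Fin 2) 1 ∧ s = 0
    then 1 else 0

lemma omegaA2_ne_zero {d : Fin 2 →₀ ℕ} {s : ℤ} (h : omegaA2 d s ≠ 0) :
    d ∈ ({Finsupp.single 0 1, Finsupp.single 1 1, Finsupp.single 0 1 + Finsupp.single 1 1} :
      Finset (Fin 2 →₀ ℕ)) ∧ s = 0 := by
  unfold omegaA2 at h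
  split_ifs at h <;> simp_all

local notation "u₁" => PochUnit (Finsupp.single (0 : Fin 2) 1) (by simp) 0
local notation "u₂" => PochUnit (Finsupp.single (1 : Fin 2) 1) (by simp) 0

lemma DTProd_omegaA2 (n : ℕ) :
    DTProd omegaA2 n = (if 1 ≤ n then u₁⁻¹ * u₂⁻¹ else 1) *
      (if 2 ≤ n then PochUnit (Finsupp.single 0 1 + Finsupp.single 1 1) (by simp) 0 else 1) := by
  rw [DTProd_eq_prod _ (fun d s => omegaA2_ne_zero) n,
    Finset.prod_insert (by simp [Finsupp.single_left_inj]), Finset.prod_insert (by simp),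
    Finset.prod_singleton]
  rcases n with _ | _ | n <;> simp [omegaA2, mul_assoc]

lemma Pser_A2_eq_Poch_mul : Pser A₂ = Poch (Finsupp.single 0 1 + Finsupp.single 1 1) 0 *
    (↑(u₁⁻¹ * u₂⁻¹) : MvPowerSeries (Fin 2) K) := by
  rw [← Pser_A2_mul_Poch_mul_Poch, ← coe_PochUnit (d := Finsupp.single 0 1) (by simp),
    ← coe_PochUnit (d := Finsupp.single 1 1) (by simp), Units.val_mul]
  linear_combination
    (-(Pser A₂ * ↑u₂⁻¹ * ↑u₂)) * Units.inv_mul u₁ - Pser A₂ * Units.inv_mul u₂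

theorem isDTExponent_omegaA2 : IsDTExponent A₂ omegaA2 := by
  refine ⟨fun d _ => (Set.finite_singleton 0).subset fun s hs => (omegaA2_ne_zero hs).2,
    fun n d hd => ?_⟩
  change d.degree ≤ n at hd
  rw [DTProd_omegaA2]
  rcases n with _ | _ | n
  · obtain rfl : d = 0 := (Finsupp.degree_eq_zero_iff d).mp (Nat.le_zero.mp hd)
    simp [coeff_Pser_A2, qPoch_zero]
  · simp only [zero_add, le_refl, ↓reduceIte, Nat.not_ofNat_le_one, mul_one] at hd ⊢
    rw [Pser_A2_eq_Poch_mul,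
      coeff_Poch_mul_of_degree_lt (D := Finsupp.single 0 1 + Finsupp.single 1 1) (by simp) 0 _
        (by simpa using hd)]
  · simp only [le_add_iff_nonneg_left, zero_le, ↓reduceIte]
    rw [Units.val_mul, coe_PochUnit, mul_comm, ← Pser_A2_eq_Poch_mul]

end A2

open Classical in
/-- **Factorization for the symmetric A₂ quiver (Sec. 5.1):**
`P_C = (x₁;q²)_∞^{−1}(x₂;q²)_∞^{−1}(x₁x₂;q²)_∞`, i.e.
`P_C · Poch((1,0),0) · Poch((0,1),0) = Poch((1,1),0)`; consequently the symmetric A₂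
quiver has exactly the three nonzero DT invariants `Ω((1,0),0) = Ω((0,1),0) = −1`,
`Ω((1,1),0) = +1`. -/
theorem statement14 :
    Pser !![(0 : ℤ), 1; 1, 0] * Poch (Finsupp.single (0 : Fin 2) 1) 0 *
        Poch (Finsupp.single (1 : Fin 2) 1) 0
      = Poch (Finsupp.single (0 : Fin 2) 1 + Finsupp.single (1 : Fin 2) 1) 0 ∧
    IsDTExponent !![(0 : ℤ), 1; 1, 0]
      (fun d s =>
        if d = Finsupp.single (0 : Fin 2) 1 ∧ s = 0 then -1
        else if d = Finsupp.single (1 : Fin 2) 1 ∧ s = 0 then -1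
        else if d = Finsupp.single (0 : Fin 2) 1 + Finsupp.single (1 : Fin 2) 1 ∧ s = 0
          then 1 else 0) :=
  ⟨Pser_A2_mul_Poch_mul_Poch, isDTExponent_omegaA2⟩
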